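/- arXiv:2104.00283 — 7 statements merged into one kernel-verified Lean document; each statement's English description precedes it below -/
import Mathlib

section
/- Let C₁, C₂ ⊆ ℝ be closed sets with empty interior. Then the limiting normal cone to the product set C₁ × C₂ ⊆ ℝ² at every point of C₁ × C₂ is all of ℝ². -/
open Filter

noncomputable abbrev E2 := EuclideanSpace ℝ (Fin 2)

/-- Proximal normal to a closed set in the Euclidean plane. -/
def ProxNormal2 (C : Set E2) (x v : E2) : Prop :=
  ∃ y, y ∉ C ∧ (∀ c ∈ C, dist y x ≤ dist y c) ∧ ∃ l : ℝ, 0 ≤ l ∧ v = l • (y - x)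

/-- Limiting normal cone membership (limits of proximal normals). -/
def LimNormal2 (C : Set E2) (x v : E2) : Prop :=
  ∃ xs vs : ℕ → E2, (∀ k, xs k ∈ C) ∧ (∀ k, ProxNormal2 C (xs k) (vs k)) ∧
    Tendsto xs atTop (nhds x) ∧ Tendsto vs atTop (nhds v)

/-!
A closed set `C ⊆ ℝ` with empty interior contains, arbitrarily close to each of its points, a
point `c` next to a gap of `C` on a prescribed side (the supremum of `C ∩ [x, u]` for some `u ∉ C`
just above `x`; reflect for the other side). Then `c` is the nearest point of `C` to `c + t w` for
all small `t > 0` and every `w` of the sign of that side. In the plane, perturb `v` to `w` with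
nonzero coordinates and apply this in each coordinate with a common step `t`: since the Euclidean
distance is monotone in the coordinate distances, the resulting point `a ∈ C₁ × C₂` is nearest to
`a + t w`, so `w` is a proximal normal at `a`. Letting the perturbation and `dist a x` tend to `0`
exhibits `v` as a limiting normal at `x`.
-/

open Filter Topology Set

theorem exists_mem_near_with_gap_above {C : Set ℝ} (hC : IsClosed C) (hInt : interior C = ∅)
    {x ε : ℝ} (hx : x ∈ C) (hε : 0 < ε) :
    ∃ c ∈ C, dist c x < ε ∧ ∃ r > 0, ∀ c' ∈ C, c' ≤ c ∨ c + r ≤ c' := by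
  obtain ⟨u, hu, huC⟩ : ∃ u ∈ Ioo x (x + ε), u ∉ C := by
    by_contra! h
    have h' := interior_maximal h isOpen_Ioo
    rw [hInt, subset_empty_iff] at h'
    exact (nonempty_Ioo.2 (by linarith)).ne_empty h'
  set A := C ∩ Icc x u
  have hAb : BddAbove A := ⟨u, fun a ha => ha.2.2⟩
  obtain ⟨hcC, hxc, hcu⟩ : sSup A ∈ A :=
    (hC.inter isClosed_Icc).csSup_mem ⟨x, hx, le_rfl, hu.1.le⟩ hAb
  have hcu' : sSup A < u := hcu.lt_of_ne fun h => huC (h ▸ hcC)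
  refine ⟨sSup A, hcC, ?_, u - sSup A, by linarith, fun c' hc' => ?_⟩
  · rw [Real.dist_eq, abs_of_nonneg (by linarith)]
    linarith [hu.2]
  · by_contra! h
    linarith [le_csSup hAb ⟨hc', by linarith, by linarith⟩]

theorem exists_mem_near_eventually_nearest_of_pos {C : Set ℝ} (hC : IsClosed C)
    (hInt : interior C = ∅) {x ε w : ℝ} (hx : x ∈ C) (hε : 0 < ε) (hw : 0 < w) :
    ∃ c ∈ C, dist c x < ε ∧ ∀ᶠ t in 𝓝[>] 0,
      c + t * w ∉ C ∧ ∀ c' ∈ C, dist (c + t * w) c ≤ dist (c + t * w) c' := by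
  obtain ⟨c, hcC, hcx, r, hr, hgap⟩ := exists_mem_near_with_gap_above hC hInt hx hε
  refine ⟨c, hcC, hcx, ?_⟩
  filter_upwards [Ioo_mem_nhdsGT (div_pos (half_pos hr) hw)] with t ⟨ht, htr⟩
  have hs : 0 < t * w := mul_pos ht hw
  have hsr : t * w < r / 2 := (lt_div_iff₀ hw).1 htr
  refine ⟨fun hmem => ?_, fun c' hc' => ?_⟩
  · rcases hgap _ hmem with h | h <;> linarith
  · rw [Real.dist_eq, Real.dist_eq, add_sub_cancel_left, abs_of_pos hs]
    rcases hgap c' hc' with h | h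
    · rw [abs_of_pos (by linarith)]
      linarith
    · rw [abs_of_neg (by linarith)]
      linarith

theorem exists_mem_near_eventually_nearest {C : Set ℝ} (hC : IsClosed C)
    (hInt : interior C = ∅) {x ε w : ℝ} (hx : x ∈ C) (hε : 0 < ε) (hw : w ≠ 0) :
    ∃ c ∈ C, dist c x < ε ∧ ∀ᶠ t in 𝓝[>] 0,
      c + t * w ∉ C ∧ ∀ c' ∈ C, dist (c + t * w) c ≤ dist (c + t * w) c' := by
  rcases hw.lt_or_gt with hw | hw
  · have hInt' : interior (-C) = ∅ := by
      change interior ((Homeomorph.neg ℝ) ⁻¹' C) = ∅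
      rw [← Homeomorph.preimage_interior, hInt, preimage_empty]
    obtain ⟨c, hcC, hcx, hnear⟩ := exists_mem_near_eventually_nearest_of_pos hC.neg hInt'
      (neg_mem_neg.2 hx) hε (neg_pos.2 hw)
    refine ⟨-c, hcC, by rwa [dist_neg], hnear.mono fun t ⟨hout, hle⟩ => ⟨fun hmem => hout ?_,
      fun c' hc' => ?_⟩⟩
    · rw [Set.mem_neg]
      convert hmem using 1
      ring
    · rw [show -c + t * w = -(c + t * -w) by ring, ← neg_neg c', dist_neg_neg, dist_neg_neg]
      exact hle (-c') (neg_mem_neg.2 hc')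
  · exact exists_mem_near_eventually_nearest_of_pos hC hInt hx hε hw

theorem EuclideanSpace.dist_le_dist_of_forall_dist_le {ι : Type*} [Fintype ι]
    {y a b : EuclideanSpace ℝ ι} (h : ∀ i, dist (y i) (a i) ≤ dist (y i) (b i)) :
    dist y a ≤ dist y b := by
  rw [EuclideanSpace.dist_eq, EuclideanSpace.dist_eq]
  gcongr with i
  exact h i

theorem PiLp.tendsto_nhds_iff {p : ENNReal} {ι α : Type*} {β : ι → Type*}
    [∀ i, TopologicalSpace (β i)] {l : Filter α} {f : α → PiLp p β} {x : PiLp p β} :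
    Tendsto f l (𝓝 x) ↔ ∀ i, Tendsto (fun k => f k i) l (𝓝 (x i)) :=
  ⟨fun h i => ((PiLp.continuous_apply p β i).tendsto x).comp h,
    fun h => ((PiLp.continuous_toLp p β).tendsto _).comp (tendsto_pi_nhds.2 h)⟩

theorem proxNormal2_pi {Cf : Fin 2 → Set ℝ} {a u : E2} {t : ℝ} (ht : 0 < t)
    (hout : ∃ i, a i + t * u i ∉ Cf i)
    (hnear : ∀ i, ∀ c ∈ Cf i, dist (a i + t * u i) (a i) ≤ dist (a i + t * u i) c) :
    ProxNormal2 {z : E2 | ∀ i, z i ∈ Cf i} a u := by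
  refine ⟨a + t • u, fun hmem => ?_, fun z hz => ?_, t⁻¹, inv_nonneg.2 ht.le, ?_⟩
  · obtain ⟨i, hi⟩ := hout
    exact hi (hmem i)
  · exact EuclideanSpace.dist_le_dist_of_forall_dist_le fun i => hnear i (z i) (hz i)
  · rw [add_sub_cancel_left, smul_smul, inv_mul_cancel₀ ht.ne', one_smul]

theorem exists_proxNormal2_pi_near {Cf : Fin 2 → Set ℝ} (hC : ∀ i, IsClosed (Cf i))
    (hInt : ∀ i, interior (Cf i) = ∅) {x : E2} (hx : ∀ i, x i ∈ Cf i) (v : E2) {ε : ℝ}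
    (hε : 0 < ε) :
    ∃ a u : E2, a ∈ {z : E2 | ∀ i, z i ∈ Cf i} ∧ ProxNormal2 {z : E2 | ∀ i, z i ∈ Cf i} a u ∧
      ∀ i, dist (a i) (x i) < ε ∧ dist (u i) (v i) < ε := by
  choose w hw0 hwv using fun i => (dense_compl_singleton (0 : ℝ)).exists_dist_lt (v i) hε
  choose c hcC hcx hnear using fun i =>
    exists_mem_near_eventually_nearest (hC i) (hInt i) (hx i) hε (hw0 i)
  obtain ⟨t, hnear_t, ht⟩ := ((eventually_all.2 hnear).and self_mem_nhdsWithin).exists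
  refine ⟨WithLp.toLp 2 c, WithLp.toLp 2 w, hcC, proxNormal2_pi ht ⟨0, (hnear_t 0).1⟩
    fun i => (hnear_t i).2, fun i => ⟨hcx i, by rw [dist_comm]; exact hwv i⟩⟩

theorem limNormal2_of_forall_exists_near {C : Set E2} {x v : E2}
    (h : ∀ ε > 0, ∃ a u : E2, a ∈ C ∧ ProxNormal2 C a u ∧
      ∀ i, dist (a i) (x i) < ε ∧ dist (u i) (v i) < ε) :
    LimNormal2 C x v := by
  choose xs vs hxs hvs hclose using fun k : ℕ => h (1 / (k + 1)) Nat.one_div_pos_of_nat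
  have tendsto_of_dist_lt {f : ℕ → E2} {y : E2} (hf : ∀ k i, dist (f k i) (y i) < 1 / (k + 1)) :
      Tendsto f atTop (𝓝 y) :=
    PiLp.tendsto_nhds_iff.2 fun i => tendsto_iff_dist_tendsto_zero.2 <|
      squeeze_zero (fun _ => dist_nonneg) (fun k => (hf k i).le)
        tendsto_one_div_add_atTop_nhds_zero_nat
  exact ⟨xs, vs, hxs, hvs, tendsto_of_dist_lt fun k i => (hclose k i).1,
    tendsto_of_dist_lt fun k i => (hclose k i).2⟩

theorem stmt1 (C₁ C₂ : Set ℝ) (hC₁ : IsClosed C₁) (hC₂ : IsClosed C₂)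
    (hInt₁ : interior C₁ = ∅) (hInt₂ : interior C₂ = ∅)
    (x : E2) (hx : x 0 ∈ C₁ ∧ x 1 ∈ C₂) (v : E2) :
    LimNormal2 {z : E2 | z 0 ∈ C₁ ∧ z 1 ∈ C₂} x v := by
  have hset : {z : E2 | z 0 ∈ C₁ ∧ z 1 ∈ C₂} = {z : E2 | ∀ i, z i ∈ ![C₁, C₂] i} := by
    ext z
    simp [Fin.forall_fin_two]
  rw [hset]
  refine limNormal2_of_forall_exists_near fun ε hε => exists_proxNormal2_pi_near ?_ ?_ ?_ v hε <;>
    simp [Fin.forall_fin_two, *]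
end

section
/- Let C ⊆ ℝ² be a closed set whose projections onto the x-axis and the y-axis each have Lebesgue measure zero. Then for any Lipschitz curve γ : ℝ → ℝ², the set E = {t ∈ ℝ : γ(t) ∈ C and γ is differentiable at t with γ'(t) ≠ 0} has Lebesgue measure zero. -/
/-!
If `γ'(t) ≠ 0`, one coordinate of `γ`, say `x`, has `x'(t) ≠ 0`, and then
`|s - t| ≤ c |x(s) - x(t)|` for `s` near `t`. So the set in question is a countable union of
pieces on each of which a coordinate of `γ` has a Lipschitz inverse and takes values in the
corresponding (null) projection of `C`; Lipschitz maps do not increase the one-dimensional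
Hausdorff measure, which on `ℝ` is Lebesgue measure.
-/

open MeasureTheory Set Filter
open scoped NNReal ENNReal

theorem le_hausdorffMeasure_image_of_dist_le_mul {X Y : Type*} [MetricSpace X]
    [MetricSpace Y] [MeasurableSpace X] [BorelSpace X] [MeasurableSpace Y] [BorelSpace Y]
    {f : X → Y} {s : Set X} {K : ℝ≥0}
    (h : ∀ x ∈ s, ∀ y ∈ s, dist x y ≤ K * dist (f x) (f y)) {d : ℝ} (hd : 0 ≤ d) :
    μH[d] s ≤ (K : ℝ≥0∞) ^ d * μH[d] (f '' s) := by
  have hf : AntilipschitzWith K (s.domRestrict f) :=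
    AntilipschitzWith.of_le_mul_dist fun x y => h x x.2 y y.2
  calc μH[d] s = μH[d] (univ : Set s) := by
        rw [← (isometry_subtype_coe (s := s)).hausdorffMeasure_image (Or.inl hd), image_univ,
          Subtype.range_coe]
    _ ≤ (K : ℝ≥0∞) ^ d * μH[d] (f '' s) := by
        simpa only [image_univ, range_domRestrict] using hf.le_hausdorffMeasure_image hd univ

theorem HasDerivAt.exists_abs_sub_le_mul_abs_sub {g : ℝ → ℝ} {d t : ℝ} (hg : HasDerivAt g d t)
    (hd : d ≠ 0) :
    ∃ n : ℕ, ∀ s, |s - t| ≤ ((n : ℝ) + 1)⁻¹ → |s - t| ≤ ((n : ℝ) + 1) * |g s - g t| := by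
  obtain ⟨c, hc⟩ := (HasDerivAtFilter.isTheta_sub hg hd).isBigO_symm.bound
  rw [prod_pure, eventually_map] at hc
  obtain ⟨ε, hε, hball⟩ := Metric.eventually_nhds_iff.1 hc
  obtain ⟨n, hn⟩ := exists_nat_gt (max c ε⁻¹)
  rw [max_lt_iff] at hn
  refine ⟨n, fun s hs => ?_⟩
  have hsε : dist s t < ε := by
    rw [Real.dist_eq]
    exact hs.trans_lt ((inv_lt_comm₀ (by positivity : (0 : ℝ) < n + 1) hε).2 (by linarith))
  calc |s - t| ≤ c * |g s - g t| := hball hsε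
    _ ≤ ((n : ℝ) + 1) * |g s - g t| := by gcongr; linarith

theorem volume_setOf_mem_of_abs_sub_le_mul_eq_zero (g : ℝ → ℝ) {N : Set ℝ} (hN : volume N = 0)
    {r : ℝ} (hr : 0 < r) (c : ℝ≥0) :
    volume {t | g t ∈ N ∧ ∀ s, |s - t| ≤ r → |s - t| ≤ c * |g s - g t|} = 0 := by
  set A := {t | g t ∈ N ∧ ∀ s, |s - t| ≤ r → |s - t| ≤ c * |g s - g t|}
  have hcover : A ⊆ ⋃ k : ℤ, A ∩ Ico (k • r) ((k + 1) • r) := by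
    rw [← inter_iUnion, iUnion_Ico_zsmul hr, inter_univ]
  refine measure_mono_null hcover (measure_iUnion_null fun k => ?_)
  have hpiece : ∀ x ∈ A ∩ Ico (k • r) ((k + 1) • r), ∀ y ∈ A ∩ Ico (k • r) ((k + 1) • r),
      dist x y ≤ c * dist (g x) (g y) := by
    rintro x ⟨-, hx⟩ y ⟨⟨-, hy⟩, hy'⟩
    simp only [mem_Ico, add_smul, one_smul] at hx hy'
    exact hy x (abs_le.2 ⟨by linarith, by linarith⟩)
  have himage : g '' (A ∩ Ico (k • r) ((k + 1) • r)) ⊆ N := by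
    rintro _ ⟨t, ⟨⟨ht, -⟩, -⟩, rfl⟩
    exact ht
  refine nonpos_iff_eq_zero.1 ?_
  calc volume (A ∩ Ico (k • r) ((k + 1) • r))
      ≤ (c : ℝ≥0∞) ^ (1 : ℝ) * μH[1] (g '' (A ∩ Ico (k • r) ((k + 1) • r))) := by
        rw [← hausdorffMeasure_real]
        exact le_hausdorffMeasure_image_of_dist_le_mul hpiece zero_le_one
    _ ≤ (c : ℝ≥0∞) ^ (1 : ℝ) * volume N := by
        rw [hausdorffMeasure_real]
        gcongr
    _ = 0 := by rw [hN, mul_zero]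

theorem volume_setOf_mem_of_deriv_ne_zero_eq_zero (g : ℝ → ℝ) {N : Set ℝ} (hN : volume N = 0) :
    volume {t | g t ∈ N ∧ DifferentiableAt ℝ g t ∧ deriv g t ≠ 0} = 0 := by
  refine measure_mono_null ?_ (measure_iUnion_null fun n : ℕ =>
    volume_setOf_mem_of_abs_sub_le_mul_eq_zero g hN (r := ((n : ℝ) + 1)⁻¹) (by positivity) (n + 1))
  rintro t ⟨htN, hg, hd⟩
  obtain ⟨n, hn⟩ := hg.hasDerivAt.exists_abs_sub_le_mul_abs_sub hd
  exact mem_iUnion.2 ⟨n, htN, by exact_mod_cast hn⟩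

theorem setOf_mem_deriv_ne_zero_subset_union (γ : ℝ → ℝ × ℝ) (C : Set (ℝ × ℝ)) :
    {t | γ t ∈ C ∧ DifferentiableAt ℝ γ t ∧ deriv γ t ≠ 0} ⊆
      {t | (γ t).1 ∈ Prod.fst '' C ∧ DifferentiableAt ℝ (fun t => (γ t).1) t ∧
          deriv (fun t => (γ t).1) t ≠ 0} ∪
        {t | (γ t).2 ∈ Prod.snd '' C ∧ DifferentiableAt ℝ (fun t => (γ t).2) t ∧
          deriv (fun t => (γ t).2) t ≠ 0} := by
  rintro t ⟨htC, hγ, hd⟩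
  have hfst : HasDerivAt (fun t => (γ t).1) (deriv γ t).1 t :=
    (ContinuousLinearMap.fst ℝ ℝ ℝ).hasFDerivAt.comp_hasDerivAt t hγ.hasDerivAt
  have hsnd : HasDerivAt (fun t => (γ t).2) (deriv γ t).2 t :=
    (ContinuousLinearMap.snd ℝ ℝ ℝ).hasFDerivAt.comp_hasDerivAt t hγ.hasDerivAt
  rcases not_and_or.1 (mt Prod.ext_iff.2 hd) with h | h
  · exact Or.inl ⟨mem_image_of_mem _ htC, hfst.differentiableAt, hfst.deriv ▸ h⟩
  · exact Or.inr ⟨mem_image_of_mem _ htC, hsnd.differentiableAt, hsnd.deriv ▸ h⟩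

theorem stmt2_general (C : Set (ℝ × ℝ))
    (h1 : volume (Prod.fst '' C) = 0) (h2 : volume (Prod.snd '' C) = 0)
    (γ : ℝ → ℝ × ℝ) :
    volume {t : ℝ | γ t ∈ C ∧ DifferentiableAt ℝ γ t ∧ deriv γ t ≠ 0} = 0 :=
  measure_mono_null (setOf_mem_deriv_ne_zero_subset_union γ C)
    (measure_union_null (volume_setOf_mem_of_deriv_ne_zero_eq_zero _ h1)
      (volume_setOf_mem_of_deriv_ne_zero_eq_zero _ h2))

theorem stmt2 (C : Set (ℝ × ℝ)) (hC : IsClosed C)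
    (h1 : volume (Prod.fst '' C) = 0) (h2 : volume (Prod.snd '' C) = 0)
    (γ : ℝ → ℝ × ℝ) (K : NNReal) (hγ : LipschitzWith K γ) :
    volume {t : ℝ | γ t ∈ C ∧ DifferentiableAt ℝ γ t ∧ deriv γ t ≠ 0} = 0 :=
  stmt2_general C h1 h2 γ
end

section
/- Let C ⊆ ℝ² be a closed set whose coordinate projections both have Lebesgue measure zero. Then for any absolutely continuous curve γ : [0,1] → ℝ², the set {t ∈ [0,1] : γ(t) ∈ C, γ is differentiable at t, and γ'(t) ≠ 0} has Lebesgue measure zero. -/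
/-!
Where `γ'(t) ≠ 0`, some coordinate `f` of `γ` has `f'(t) ≠ 0`, so `|s - t| ≤ K |f s - f t|` for
`s` near `t`. Grading the points by `K` and by the size of that neighbourhood writes the set as a
countable union of pieces on each of which `f` is anti-Lipschitz; such a piece has at most `K`
times the one-dimensional Hausdorff measure of its image, which lies in a null projection of `C`.
-/

open MeasureTheory Set

/-- Absolute continuity of a curve on `[0,1]`: differentiable a.e., derivative integrable,
and the fundamental theorem of calculus holds. -/
def AbsCont {E : Type*} [NormedAddCommGroup E] [NormedSpace ℝ E] (γ : ℝ → E) : Prop :=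
  (∀ᵐ t ∂(volume.restrict (Icc (0:ℝ) 1)), DifferentiableAt ℝ γ t) ∧
  IntegrableOn (deriv γ) (Icc (0:ℝ) 1) volume ∧
  ∀ t ∈ Icc (0:ℝ) 1, γ t - γ 0 = ∫ s in (0:ℝ)..t, deriv γ s

open Filter Topology Metric
open scoped NNReal ENNReal

section HausdorffMeasure

variable {X Y : Type*} [MetricSpace X] [MetricSpace Y] [MeasurableSpace X] [BorelSpace X]
  [MeasurableSpace Y] [BorelSpace Y] {f : X → Y} {s : Set X} {d : ℝ}

theorem AntilipschitzWith.hausdorffMeasure_le_of_domRestrict {K : ℝ≥0}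
    (hf : AntilipschitzWith K (s.domRestrict f)) (hd : 0 ≤ d) :
    μH[d] s ≤ (K : ℝ≥0∞) ^ d * μH[d] (f '' s) :=
  calc μH[d] s = μH[d] (univ : Set s) := by
        rw [← (isometry_subtype_coe (s := s)).hausdorffMeasure_image (Or.inl hd), image_univ,
          Subtype.range_coe]
    _ ≤ (K : ℝ≥0∞) ^ d * μH[d] (range (s.domRestrict f)) := by
        simpa only [image_univ] using hf.le_hausdorffMeasure_image hd univ
    _ = (K : ℝ≥0∞) ^ d * μH[d] (f '' s) := by rw [range_domRestrict]

variable [SecondCountableTopology X]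

theorem hausdorffMeasure_eq_zero_of_le_mul_dist {K : ℝ≥0} {r : ℝ} (hr : 0 < r)
    (hs : ∀ x ∈ s, ∀ y ∈ s, dist y x < r → dist y x ≤ K * dist (f y) (f x)) (hd : 0 ≤ d)
    (hfs : μH[d] (f '' s) = 0) : μH[d] s = 0 := by
  refine measure_null_of_locally_null s fun x _ =>
    ⟨s ∩ ball x (r / 2), inter_mem_nhdsWithin s (ball_mem_nhds x (half_pos hr)), ?_⟩
  have hanti : AntilipschitzWith K ((s ∩ ball x (r / 2)).domRestrict f) :=
    AntilipschitzWith.of_le_mul_dist fun y z => hs z z.2.1 y y.2.1 <|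
      calc dist (y : X) z ≤ dist (y : X) x + dist (z : X) x := dist_triangle_right _ _ _
        _ < r / 2 + r / 2 := add_lt_add y.2.2 z.2.2
        _ = r := add_halves r
  refine le_antisymm ((hanti.hausdorffMeasure_le_of_domRestrict hd).trans ?_) zero_le
  rw [measure_mono_null (image_mono inter_subset_left) hfs, mul_zero]

theorem hausdorffMeasure_eq_zero_of_eventually_le_mul_dist
    (hs : ∀ x ∈ s, ∃ K : ℝ, ∀ᶠ y in 𝓝 x, dist y x ≤ K * dist (f y) (f x)) (hd : 0 ≤ d)
    (hfs : μH[d] (f '' s) = 0) : μH[d] s = 0 := by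
  set expanding : ℕ → Set X := fun n =>
    {x ∈ s | ∀ y, dist y x < 1 / (n + 1) → dist y x ≤ n * dist (f y) (f x)}
  have hcover : s ⊆ ⋃ n, expanding n := by
    intro x hx
    obtain ⟨K, hK⟩ := hs x hx
    obtain ⟨δ, hδ, hball⟩ := Metric.eventually_nhds_iff.1 hK
    obtain ⟨n, hn⟩ := exists_nat_gt (max K (1 / δ))
    have hnδ : 1 / ((n : ℝ) + 1) < δ :=
      (one_div_lt (by positivity) hδ).2 (by linarith [le_max_right K (1 / δ)])
    refine mem_iUnion.2 ⟨n, hx, fun y hy => (hball (hy.trans hnδ)).trans ?_⟩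
    gcongr
    exact (le_max_left _ _).trans hn.le
  refine measure_mono_null hcover (measure_iUnion_null fun n => ?_)
  exact hausdorffMeasure_eq_zero_of_le_mul_dist (K := n) (r := 1 / (n + 1)) (by positivity)
    (fun x hx y _ hy => by exact_mod_cast hx.2 y hy) hd
    (measure_mono_null (image_mono fun _ hx => hx.1) hfs)

end HausdorffMeasure

theorem HasDerivAt.exists_eventually_dist_le_mul_dist {𝕜 F : Type*} [NontriviallyNormedField 𝕜]
    [NormedAddCommGroup F] [NormedSpace 𝕜 F] {f : 𝕜 → F} {f' : F} {x : 𝕜}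
    (hf : HasDerivAt f f' x) (hf' : f' ≠ 0) :
    ∃ K : ℝ, ∀ᶠ y in 𝓝 x, dist y x ≤ K * dist (f y) (f x) := by
  obtain ⟨K, hK⟩ := (HasDerivAtFilter.isTheta_sub hf hf').isBigO_symm.bound
  rw [prod_pure, eventually_map] at hK
  exact ⟨K, by simpa only [dist_eq_norm] using hK⟩

theorem volume_eq_zero_of_hasDerivAt_ne_zero {f f' : ℝ → ℝ} {s : Set ℝ}
    (hf : ∀ x ∈ s, HasDerivAt f (f' x) x) (hf' : ∀ x ∈ s, f' x ≠ 0)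
    (hfs : volume (f '' s) = 0) : volume s = 0 := by
  rw [← hausdorffMeasure_real] at hfs ⊢
  exact hausdorffMeasure_eq_zero_of_eventually_le_mul_dist
    (fun x hx => (hf x hx).exists_eventually_dist_le_mul_dist (hf' x hx)) zero_le_one hfs

theorem stmt3_general (C : Set (ℝ × ℝ))
    (h1 : volume (Prod.fst '' C) = 0) (h2 : volume (Prod.snd '' C) = 0)
    (γ : ℝ → ℝ × ℝ) :
    volume {t ∈ Icc (0:ℝ) 1 | γ t ∈ C ∧ DifferentiableAt ℝ γ t ∧ deriv γ t ≠ 0} = 0 := by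
  set S := {t ∈ Icc (0:ℝ) 1 | γ t ∈ C ∧ DifferentiableAt ℝ γ t ∧ deriv γ t ≠ 0}
  have hγ : ∀ t ∈ S, HasDerivAt γ (deriv γ t) t := fun t ht => ht.2.2.1.hasDerivAt
  have hfst : volume {t ∈ S | (deriv γ t).1 ≠ 0} = 0 :=
    volume_eq_zero_of_hasDerivAt_ne_zero (f := fun t => (γ t).1)
      (fun t ht => hasFDerivAt_fst.comp_hasDerivAt t (hγ t ht.1)) (fun _ ht => ht.2)
      (measure_mono_null (by rintro _ ⟨t, ht, rfl⟩; exact mem_image_of_mem _ ht.1.2.1) h1)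
  have hsnd : volume {t ∈ S | (deriv γ t).2 ≠ 0} = 0 :=
    volume_eq_zero_of_hasDerivAt_ne_zero (f := fun t => (γ t).2)
      (fun t ht => hasFDerivAt_snd.comp_hasDerivAt t (hγ t ht.1)) (fun _ ht => ht.2)
      (measure_mono_null (by rintro _ ⟨t, ht, rfl⟩; exact mem_image_of_mem _ ht.1.2.1) h2)
  refine measure_mono_null (fun t ht => ?_) (measure_union_null hfst hsnd)
  by_contra h
  simp only [mem_union, mem_ofPred_eq, not_or, not_and, not_not] at h
  exact ht.2.2.2 (Prod.ext (h.1 ht) (h.2 ht))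

theorem stmt3 (C : Set (ℝ × ℝ)) (hC : IsClosed C)
    (h1 : volume (Prod.fst '' C) = 0) (h2 : volume (Prod.snd '' C) = 0)
    (γ : ℝ → ℝ × ℝ) (hγ : AbsCont γ) :
    volume {t ∈ Icc (0:ℝ) 1 | γ t ∈ C ∧ DifferentiableAt ℝ γ t ∧ deriv γ t ≠ 0} = 0 :=
  stmt3_general C h1 h2 γ
end

section
/- Let J : ℝᵖ ⇉ ℝ^{m×p} be a set-valued map with closed graph, nonempty and locally bounded values, and suppose there exists a locally Lipschitz G : ℝᵖ → ℝᵐ such that for every absolutely continuous γ : [0,1] → ℝᵖ and almost every t ∈ [0,1], d/dt G(γ(t)) = M γ'(t) for all M ∈ J(γ(t)). Then for every absolutely continuous loop γ : [0,1] → ℝᵖ with γ(0) = γ(1) and every measurable selection V(t) ∈ J(γ(t)), the integral ∫₀¹ V(t) γ'(t) dt equals 0. -/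
/-! The map `G ∘ γ` is absolutely continuous, being a Lipschitz function (on the compact trace of
`γ`) of an absolutely continuous curve. By the chain rule hypothesis its derivative is
`V t (γ' t)` for almost every `t`, so the fundamental theorem of calculus for absolutely
continuous functions turns the circulation into `G (γ 1) - G (γ 0) = 0`. -/

open MeasureTheory Set

/-- Action of an `m × p` matrix (as `Fin m → Fin p → ℝ`) on a vector. -/
def mulv {m p : ℕ} (A : Fin m → Fin p → ℝ) (x : Fin p → ℝ) : Fin m → ℝ :=
  fun i => ∑ j, A i j * x j

open Filter

namespace AbsolutelyContinuousOnInterval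

variable {a b : ℝ}

theorem of_dist_le {X Y : Type*} [PseudoMetricSpace X] [PseudoMetricSpace Y] {F : ℝ → X}
    {g : ℝ → Y} (hF : AbsolutelyContinuousOnInterval F a b) (K : ℝ)
    (hg : ∀ x ∈ uIcc a b, ∀ y ∈ uIcc a b, dist (g x) (g y) ≤ K * dist (F x) (F y)) :
    AbsolutelyContinuousOnInterval g a b := by
  have hKF := (Tendsto.const_mul K hF : Tendsto _ _ _)
  rw [mul_zero] at hKF
  refine squeeze_zero' (Eventually.of_forall fun _ ↦ Finset.sum_nonneg fun _ _ ↦ dist_nonneg) ?_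
    hKF
  filter_upwards [eventually_inf_principal.2 (Eventually.of_forall fun _ h ↦ h)] with E hE
  rw [Finset.mul_sum]
  exact Finset.sum_le_sum fun i hi ↦ hg _ (hE.1 i hi).1 _ (hE.1 i hi).2

theorem intervalIntegrable_of_ae_hasDerivAt {f f' : ℝ → ℝ}
    (hf : AbsolutelyContinuousOnInterval f a b)
    (hf' : ∀ᵐ t, t ∈ uIoc a b → HasDerivAt f (f' t) t) :
    IntervalIntegrable f' volume a b :=
  hf.intervalIntegrable_deriv.congr_ae <| (ae_restrict_iff' measurableSet_uIoc).2 <| by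
    filter_upwards [hf'] with t ht hmem using (ht hmem).deriv

theorem integral_eq_sub_of_ae_hasDerivAt {f f' : ℝ → ℝ}
    (hf : AbsolutelyContinuousOnInterval f a b)
    (hf' : ∀ᵐ t, t ∈ uIoc a b → HasDerivAt f (f' t) t) :
    ∫ t in a..b, f' t = f b - f a := by
  rw [← hf.integral_deriv_eq_sub]
  refine intervalIntegral.integral_congr_ae ?_
  filter_upwards [hf'] with t ht hmem using (ht hmem).deriv.symm

end AbsolutelyContinuousOnInterval

theorem LipschitzOnWith.comp_absolutelyContinuousOnInterval {X Y : Type*} [PseudoMetricSpace X]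
    [PseudoMetricSpace Y] {f : X → Y} {g : ℝ → X} {K : NNReal} {s : Set X} {a b : ℝ}
    (hf : LipschitzOnWith K f s) (hg : AbsolutelyContinuousOnInterval g a b)
    (hgs : MapsTo g (uIcc a b) s) : AbsolutelyContinuousOnInterval (f ∘ g) a b :=
  hg.of_dist_le K fun _ hx _ hy ↦ hf.dist_le_mul _ (hgs hx) _ (hgs hy)

theorem AbsolutelyContinuousOnInterval.integral_pi_eq_sub_of_ae_hasDerivAt {ι : Type*}
    [Fintype ι] {F F' : ℝ → ι → ℝ} {a b : ℝ} (hF : AbsolutelyContinuousOnInterval F a b)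
    (hF' : ∀ᵐ t, t ∈ uIoc a b → HasDerivAt F (F' t) t) :
    ∫ t in a..b, F' t = F b - F a := by
  have hFi : ∀ i, AbsolutelyContinuousOnInterval (F · i) a b := fun i ↦
    (LipschitzWith.eval (α := fun _ : ι ↦ ℝ) i).lipschitzOnWith
      |>.comp_absolutelyContinuousOnInterval hF (mapsTo_univ _ _)
  have hF'i : ∀ i, ∀ᵐ t, t ∈ uIoc a b → HasDerivAt (F · i) (F' t i) t := fun i ↦ by
    filter_upwards [hF'] with t ht hmem using hasDerivAt_pi.1 (ht hmem) i
  have hint : IntervalIntegrable F' volume a b := by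
    rw [intervalIntegrable_iff, IntegrableOn, integrable_pi_iff]
    exact fun i ↦ intervalIntegrable_iff.1 ((hFi i).intervalIntegrable_of_ae_hasDerivAt (hF'i i))
  ext i
  rw [Pi.sub_apply, ← (hFi i).integral_eq_sub_of_ae_hasDerivAt (hF'i i)]
  exact ((ContinuousLinearMap.proj (R := ℝ) (φ := fun _ : ι ↦ ℝ) i).intervalIntegral_comp_comm
    hint).symm

theorem AbsCont.absolutelyContinuousOnInterval {E : Type*} [NormedAddCommGroup E]
    [NormedSpace ℝ E] {γ : ℝ → E} (hγ : AbsCont γ) : AbsolutelyContinuousOnInterval γ 0 1 := by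
  obtain ⟨-, hint, hrep⟩ := hγ
  rw [← uIcc_of_le zero_le_one] at hint hrep
  have hII : ∀ x ∈ uIcc (0:ℝ) 1, IntervalIntegrable (deriv γ) volume 0 x := fun x hx ↦
    (hint.mono_set (uIcc_subset_uIcc_left hx)).intervalIntegrable
  -- `γ` moves no faster than the primitive of `‖γ'‖`, which is absolutely continuous.
  refine (IntegrableOn.intervalIntegrable hint.norm
    |>.absolutelyContinuousOnInterval_intervalIntegral (c := 0) left_mem_uIcc).of_dist_le 1
    fun x hx y hy ↦ ?_
  rw [dist_eq_norm, Real.dist_eq, one_mul,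
    intervalIntegral.integral_interval_sub_left (hII x hx).norm (hII y hy).norm,
    ← sub_sub_sub_cancel_right _ _ (γ 0), hrep x hx, hrep y hy,
    intervalIntegral.integral_interval_sub_left (hII x hx) (hII y hy)]
  exact intervalIntegral.norm_integral_le_abs_integral_norm

theorem stmt5_general (p m : ℕ) (J : (Fin p → ℝ) → Set (Fin m → Fin p → ℝ))
    (G : (Fin p → ℝ) → (Fin m → ℝ)) (hG : LocallyLipschitz G)
    (hchain : ∀ γ : ℝ → (Fin p → ℝ), AbsCont γ →
      ∀ᵐ t ∂(volume.restrict (Icc (0:ℝ) 1)), ∀ M ∈ J (γ t),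
        HasDerivAt (fun s => G (γ s)) (mulv M (deriv γ t)) t)
    (γ : ℝ → (Fin p → ℝ)) (hγ : AbsCont γ) (hloop : γ 0 = γ 1)
    (V : ℝ → (Fin m → Fin p → ℝ))
    (hVsel : ∀ t ∈ Icc (0:ℝ) 1, V t ∈ J (γ t)) :
    (∫ t in (0:ℝ)..1, mulv (V t) (deriv γ t)) = 0 := by
  have hγAC := hγ.absolutelyContinuousOnInterval
  obtain ⟨L, hL⟩ := hG.locallyLipschitzOn.exists_lipschitzOnWith_of_compact
    (isCompact_uIcc.image_of_continuousOn hγAC.continuousOn)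
  have hGγAC := hL.comp_absolutelyContinuousOnInterval hγAC (mapsTo_image _ _)
  have hderiv : ∀ᵐ t, t ∈ uIoc (0:ℝ) 1 →
      HasDerivAt (G ∘ γ) (mulv (V t) (deriv γ t)) t := by
    filter_upwards [(ae_restrict_iff' measurableSet_Icc).1 (hchain γ hγ)] with t ht hmem
    rw [uIoc_of_le zero_le_one] at hmem
    exact ht (Ioc_subset_Icc_self hmem) _ (hVsel t (Ioc_subset_Icc_self hmem))
  rw [hGγAC.integral_pi_eq_sub_of_ae_hasDerivAt hderiv, Function.comp_apply, Function.comp_apply,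
    hloop, sub_self]

theorem stmt5 (p m : ℕ) (J : (Fin p → ℝ) → Set (Fin m → Fin p → ℝ))
    (hclosed : IsClosed {q : (Fin p → ℝ) × (Fin m → Fin p → ℝ) | q.2 ∈ J q.1})
    (hne : ∀ x, (J x).Nonempty)
    (hlb : ∀ K : Set (Fin p → ℝ), IsCompact K →
      ∃ M : ℝ, ∀ x ∈ K, ∀ A ∈ J x, ∀ i j, |A i j| ≤ M)
    (G : (Fin p → ℝ) → (Fin m → ℝ)) (hG : LocallyLipschitz G)
    (hchain : ∀ γ : ℝ → (Fin p → ℝ), AbsCont γ →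
      ∀ᵐ t ∂(volume.restrict (Icc (0:ℝ) 1)), ∀ M ∈ J (γ t),
        HasDerivAt (fun s => G (γ s)) (mulv M (deriv γ t)) t)
    (γ : ℝ → (Fin p → ℝ)) (hγ : AbsCont γ) (hloop : γ 0 = γ 1)
    (V : ℝ → (Fin m → Fin p → ℝ)) (hVmeas : Measurable V)
    (hVsel : ∀ t ∈ Icc (0:ℝ) 1, V t ∈ J (γ t)) :
    (∫ t in (0:ℝ)..1, mulv (V t) (deriv γ t)) = 0 :=
  stmt5_general p m J G hG hchain γ hγ hloop V hVsel
end

section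
/- Define F : ℝ² → ℝ by F(x,y) = −y·min(|x|,1) + min(0,y). Then: (a) for every x ∈ ℝ, sup_{y∈ℝ} F(x,y) = 0 and the supremum is attained; (b) for x = 0 and every y > 0, F(0,y) = 0, so every y > 0 is a maximizer; (c) the value function f(x) = max_y F(x,y) is differentiable at 0 with f'(0) = 0, while for every y > 0 the set {u ∈ ℝ : (u,0) ∈ ∂°F(0,y)} contains the interval [−y, y], where ∂° denotes the Clarke subdifferential of F at (0,y). -/
open Filter Set

/-- Clarke subdifferential (as a set of "gradient" pairs) of a locally Lipschitz
function on `ℝ²`: convex hull of limits of gradients at nearby differentiability points. -/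
def clarkeP (g : ℝ × ℝ → ℝ) (z : ℝ × ℝ) : Set (ℝ × ℝ) :=
  convexHull ℝ {v | ∃ zk : ℕ → ℝ × ℝ, (∀ k, DifferentiableAt ℝ g (zk k)) ∧
    Tendsto zk atTop (nhds z) ∧
    Tendsto (fun k => (fderiv ℝ g (zk k) (1, 0), fderiv ℝ g (zk k) (0, 1))) atTop (nhds v)}

noncomputable def Ffun (x y : ℝ) : ℝ := -y * min |x| 1 + min 0 y

noncomputable def fval (x : ℝ) : ℝ := sSup (Set.range fun y => Ffun x y)

lemma Ffun_le (x y : ℝ) : Ffun x y ≤ 0 := by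
  have hm0 : 0 ≤ min |x| 1 := le_min (abs_nonneg x) one_pos.le
  have hm1 : min |x| 1 ≤ 1 := min_le_right _ _
  unfold Ffun
  rcases le_total 0 y with h | h
  · rw [min_eq_left h]; nlinarith
  · rw [min_eq_right h]; nlinarith

lemma Ffun_zero (x : ℝ) : Ffun x 0 = 0 := by simp [Ffun]

lemma isGreatest_F (x : ℝ) : IsGreatest (Set.range fun y => Ffun x y) 0 :=
  ⟨⟨0, Ffun_zero x⟩, by rintro z ⟨y, rfl⟩; exact Ffun_le x y⟩

lemma hasFDerivAt_right {p : ℝ × ℝ} (ha0 : 0 < p.1) (ha1 : p.1 < 1) (hb : 0 < p.2) :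
    HasFDerivAt (fun q : ℝ × ℝ => Ffun q.1 q.2)
      (-(p.1 • ContinuousLinearMap.snd ℝ ℝ ℝ + p.2 • ContinuousLinearMap.fst ℝ ℝ ℝ)) p := by
  have hsmooth : HasFDerivAt (fun q : ℝ × ℝ => -(q.1 * q.2))
      (-(p.1 • ContinuousLinearMap.snd ℝ ℝ ℝ + p.2 • ContinuousLinearMap.fst ℝ ℝ ℝ)) p :=
    (hasFDerivAt_fst.mul hasFDerivAt_snd).neg
  apply hsmooth.congr_of_eventuallyEq
  have hopen : IsOpen {q : ℝ × ℝ | 0 < q.1 ∧ q.1 < 1 ∧ 0 < q.2} :=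
    (isOpen_lt continuous_const continuous_fst).inter
      ((isOpen_lt continuous_fst continuous_const).inter
        (isOpen_lt continuous_const continuous_snd))
  filter_upwards [hopen.mem_nhds ⟨ha0, ha1, hb⟩] with q hq
  obtain ⟨h1, h2, h3⟩ := hq
  simp only [Ffun, abs_of_pos h1, min_eq_left h2.le, min_eq_left h3.le]
  ring

lemma hasFDerivAt_left {p : ℝ × ℝ} (ha0 : p.1 < 0) (ha1 : -1 < p.1) (hb : 0 < p.2) :
    HasFDerivAt (fun q : ℝ × ℝ => Ffun q.1 q.2)
      (p.1 • ContinuousLinearMap.snd ℝ ℝ ℝ + p.2 • ContinuousLinearMap.fst ℝ ℝ ℝ) p := by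
  have hsmooth : HasFDerivAt (fun q : ℝ × ℝ => q.1 * q.2)
      (p.1 • ContinuousLinearMap.snd ℝ ℝ ℝ + p.2 • ContinuousLinearMap.fst ℝ ℝ ℝ) p :=
    hasFDerivAt_fst.mul hasFDerivAt_snd
  apply hsmooth.congr_of_eventuallyEq
  have hopen : IsOpen {q : ℝ × ℝ | q.1 < 0 ∧ -1 < q.1 ∧ 0 < q.2} :=
    (isOpen_lt continuous_fst continuous_const).inter
      ((isOpen_lt continuous_const continuous_fst).inter
        (isOpen_lt continuous_const continuous_snd))
  filter_upwards [hopen.mem_nhds ⟨ha0, ha1, hb⟩] with q hq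
  obtain ⟨h1, h2, h3⟩ := hq
  have habs : |q.1| = -q.1 := abs_of_neg h1
  have hle : -q.1 ≤ 1 := by linarith
  simp only [Ffun, habs, min_eq_left hle, min_eq_left h3.le]
  ring

lemma tendsto_inv_k2 : Tendsto (fun k : ℕ => ((k : ℝ) + 2)⁻¹) atTop (nhds 0) :=
  Tendsto.inv_tendsto_atTop
    (tendsto_atTop_add_const_right _ 2 tendsto_natCast_atTop_atTop)

lemma invk2_pos (k : ℕ) : 0 < ((k : ℝ) + 2)⁻¹ := by positivity
lemma invk2_lt_one (k : ℕ) : ((k : ℝ) + 2)⁻¹ < 1 := by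
  rw [inv_lt_one_iff₀]; right; have : (0:ℝ) ≤ k := Nat.cast_nonneg k; linarith

lemma mem_base_right (y : ℝ) (hy : 0 < y) :
    ((-y, 0) : ℝ × ℝ) ∈ {v : ℝ × ℝ | ∃ zk : ℕ → ℝ × ℝ,
      (∀ k, DifferentiableAt ℝ (fun q : ℝ × ℝ => Ffun q.1 q.2) (zk k)) ∧
      Tendsto zk atTop (nhds (0, y)) ∧
      Tendsto (fun k => (fderiv ℝ (fun q : ℝ × ℝ => Ffun q.1 q.2) (zk k) (1, 0),
        fderiv ℝ (fun q : ℝ × ℝ => Ffun q.1 q.2) (zk k) (0, 1))) atTop (nhds v)} := by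
  refine ⟨fun k => (((k : ℝ) + 2)⁻¹, y), fun k => ?_, ?_, ?_⟩
  · exact (hasFDerivAt_right (invk2_pos k) (invk2_lt_one k) hy).differentiableAt
  · exact tendsto_inv_k2.prodMk_nhds tendsto_const_nhds
  · have hfd : ∀ k : ℕ, (fderiv ℝ (fun q : ℝ × ℝ => Ffun q.1 q.2) (((k : ℝ) + 2)⁻¹, y) (1, 0),
        fderiv ℝ (fun q : ℝ × ℝ => Ffun q.1 q.2) (((k : ℝ) + 2)⁻¹, y) (0, 1))
        = (-y, -(((k : ℝ) + 2)⁻¹)) := by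
      intro k
      rw [(hasFDerivAt_right (invk2_pos k) (invk2_lt_one k) hy).fderiv]
      simp
    simp only [hfd]
    have h2 : Tendsto (fun k : ℕ => -(((k : ℝ) + 2)⁻¹)) atTop (nhds 0) := by
      simpa using tendsto_inv_k2.neg
    exact tendsto_const_nhds.prodMk_nhds h2

lemma mem_base_left (y : ℝ) (hy : 0 < y) :
    ((y, 0) : ℝ × ℝ) ∈ {v : ℝ × ℝ | ∃ zk : ℕ → ℝ × ℝ,
      (∀ k, DifferentiableAt ℝ (fun q : ℝ × ℝ => Ffun q.1 q.2) (zk k)) ∧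
      Tendsto zk atTop (nhds (0, y)) ∧
      Tendsto (fun k => (fderiv ℝ (fun q : ℝ × ℝ => Ffun q.1 q.2) (zk k) (1, 0),
        fderiv ℝ (fun q : ℝ × ℝ => Ffun q.1 q.2) (zk k) (0, 1))) atTop (nhds v)} := by
  refine ⟨fun k => (-((k : ℝ) + 2)⁻¹, y), fun k => ?_, ?_, ?_⟩
  · exact (hasFDerivAt_left (neg_neg_iff_pos.mpr (invk2_pos k) : -((k:ℝ)+2)⁻¹ < 0)
      (by have := invk2_lt_one k; linarith) hy).differentiableAt
  · have : Tendsto (fun k : ℕ => -((k : ℝ) + 2)⁻¹) atTop (nhds 0) := by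
      simpa using tendsto_inv_k2.neg
    exact this.prodMk_nhds tendsto_const_nhds
  · have hfd : ∀ k : ℕ, (fderiv ℝ (fun q : ℝ × ℝ => Ffun q.1 q.2) (-((k : ℝ) + 2)⁻¹, y) (1, 0),
        fderiv ℝ (fun q : ℝ × ℝ => Ffun q.1 q.2) (-((k : ℝ) + 2)⁻¹, y) (0, 1))
        = (y, -(((k : ℝ) + 2)⁻¹)) := by
      intro k
      rw [(hasFDerivAt_left (neg_neg_iff_pos.mpr (invk2_pos k) : -((k:ℝ)+2)⁻¹ < 0)
        (by have := invk2_lt_one k; linarith) hy).fderiv]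
      simp
    simp only [hfd]
    have h2 : Tendsto (fun k : ℕ => -(((k : ℝ) + 2)⁻¹)) atTop (nhds 0) := by
      simpa using tendsto_inv_k2.neg
    exact tendsto_const_nhds.prodMk_nhds h2

theorem stmt8 :
    -- (a) the supremum in y is 0 and is attained
    (∀ x : ℝ, IsGreatest (Set.range fun y => Ffun x y) 0) ∧
    -- (b) every y > 0 is a maximizer at x = 0
    (∀ y : ℝ, 0 < y → Ffun 0 y = 0) ∧
    -- (c) the value function is differentiable at 0 with derivative 0 ...
    HasDerivAt fval 0 0 ∧
    -- ... while the PO formula set at any maximizer y > 0 contains [-y, y]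
    (∀ y : ℝ, 0 < y →
      Icc (-y) y ⊆ {u : ℝ | (u, (0:ℝ)) ∈ clarkeP (fun q => Ffun q.1 q.2) (0, y)}) := by
  refine ⟨isGreatest_F, ?_, ?_, ?_⟩
  · intro y hy
    simp [Ffun, min_eq_left hy.le, abs_of_nonneg (le_refl (0:ℝ))]
  · have hc : fval = fun _ : ℝ => (0 : ℝ) := funext fun x => (isGreatest_F x).csSup_eq
    rw [hc]; exact hasDerivAt_const 0 0
  · intro y hy u hu
    have hA := subset_convexHull ℝ _ (mem_base_right y hy)
    have hB := subset_convexHull ℝ _ (mem_base_left y hy)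
    have hconv := convex_convexHull ℝ
      {v : ℝ × ℝ | ∃ zk : ℕ → ℝ × ℝ,
        (∀ k, DifferentiableAt ℝ (fun q : ℝ × ℝ => Ffun q.1 q.2) (zk k)) ∧
        Tendsto zk atTop (nhds ((0:ℝ), y)) ∧
        Tendsto (fun k => (fderiv ℝ (fun q : ℝ × ℝ => Ffun q.1 q.2) (zk k) (1, 0),
          fderiv ℝ (fun q : ℝ × ℝ => Ffun q.1 q.2) (zk k) (0, 1))) atTop (nhds v)}
    have hy' : (0:ℝ) < 2 * y := by linarith
    have ht1 : (0:ℝ) ≤ (y - u) / (2 * y) := by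
      apply div_nonneg _ hy'.le; linarith [hu.2]
    have ht2 : (0:ℝ) ≤ (y + u) / (2 * y) := by
      apply div_nonneg _ hy'.le; linarith [hu.1]
    have hsum : (y - u) / (2 * y) + (y + u) / (2 * y) = 1 := by
      field_simp; ring
    have := hconv hA hB ht1 ht2 hsum
    have heq : ((y - u) / (2 * y)) • ((-y, 0) : ℝ × ℝ)
        + ((y + u) / (2 * y)) • ((y, 0) : ℝ × ℝ) = (u, 0) := by
      ext
      · simp only [Prod.fst_add, Prod.smul_fst, smul_eq_mul]
        field_simp; ring
      · simp
    rw [heq] at this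
    exact this
end

section
/- Let S ⊆ ℝ be a closed set with empty interior (e.g. a Cantor set), let C = S × S ⊆ ℝ², and let f(z) = −dist(z, C). Then for every z ∈ C, the Clarke subdifferential ∂°f(z) equals the closed unit Euclidean ball in ℝ². -/
/-!
Since `f = -dist(·, C)` is 1-Lipschitz, all its gradients lie in the closed unit ball, hence so
does `∂°f(z)`. Conversely the ball is the convex hull of the unit sphere, so it suffices to realise
every unit vector `v` as a gradient of `f` at points arbitrarily close to `z`.

Because `S` is closed with empty interior, arbitrarily close to any point of `S` there is a point
`a ∈ S` followed, on a prescribed side, by a gap of `S`. Choosing `a = (a₀, a₁) ∈ C` near `z` with a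
gap of `S` after `aᵢ` in the direction of `-vᵢ`, and `θ > 0` small, we use
`dist(·, C)² = dist(·₀, S)² + dist(·₁, S)²`: near `a - θv` the `i`-th summand equals `(·ᵢ - aᵢ)²`
(or has derivative `0` at `aᵢ` when `vᵢ = 0`), so `f` has gradient exactly `v` at `a - θv`.
-/

open Filter Set Metric

/-- Clarke subdifferential of a locally Lipschitz function on the Euclidean plane:
convex hull of limits of gradients at nearby points of differentiability. -/
def clarke (g : E2 → ℝ) (z : E2) : Set E2 :=
  convexHull ℝ {v | ∃ zk gk : ℕ → E2, (∀ k, HasGradientAt g (gk k) (zk k)) ∧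
    Tendsto zk atTop (nhds z) ∧ Tendsto gk atTop (nhds v)}

open Topology

namespace Real

variable {S : Set ℝ} {a h x ε : ℝ}

lemma infDist_le_abs_sub {t : ℝ} (ha : a ∈ S) : infDist t S ≤ |t - a| :=
  infDist_le_dist_of_mem ha

lemma hasDerivAt_sq_infDist_of_mem (ha : a ∈ S) :
    HasDerivAt (fun t => infDist t S ^ 2) 0 a := by
  have hO : (fun t => infDist t S ^ 2) =O[𝓝 a] fun t => ‖t - a‖ ^ 2 :=
    .of_bound 1 <| Eventually.of_forall fun t => by
      rw [one_mul, norm_pow, norm_pow, norm_norm, Real.norm_of_nonneg infDist_nonneg]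
      exact pow_le_pow_left₀ infDist_nonneg (infDist_le_abs_sub ha) 2
  simpa using (hO.hasFDerivAt (𝕜 := ℝ) one_lt_two).hasDerivAt

/-- `ball (a + 2 * h) (2 * |h|)` is the open interval between `a` and `a + 4 * h`; on the half of
it nearer to `a`, the point `a` is nearest in `S`. -/
lemma infDist_eq_abs_sub_of_disjoint_ball (ha : a ∈ S)
    (hgap : Disjoint (ball (a + 2 * h) (2 * |h|)) S) {t : ℝ}
    (ht : t ∈ closedBall (a + h) |h|) : infDist t S = |t - a| := by
  refine (infDist_le_abs_sub ha).antisymm ((le_infDist ⟨a, ha⟩).2 fun s hs => ?_)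
  have hs' : |2 * h| ≤ |s - (a + 2 * h)| := by
    simpa [Real.dist_eq, abs_mul] using hgap.notMem_of_mem_right hs
  rw [mem_closedBall, Real.dist_eq, ← sq_le_sq] at ht
  rw [Real.dist_eq, ← sq_le_sq]
  nlinarith [sq_le_sq.2 hs', sq_nonneg (s - a), sq_nonneg (t - a), sq_nonneg (s - t)]

lemma hasDerivAt_sq_infDist_of_disjoint_ball (ha : a ∈ S)
    (hgap : Disjoint (ball (a + 2 * h) (2 * |h|)) S) :
    HasDerivAt (fun t => infDist t S ^ 2) (2 * h) (a + h) := by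
  rcases eq_or_ne h 0 with rfl | hh
  · simpa using hasDerivAt_sq_infDist_of_mem ha
  have hloc : (fun t => infDist t S ^ 2) =ᶠ[𝓝 (a + h)] fun t => (t - a) ^ 2 := by
    filter_upwards [closedBall_mem_nhds _ (abs_pos.2 hh)] with t ht
    rw [infDist_eq_abs_sub_of_disjoint_ball ha hgap ht, sq_abs]
  refine HasDerivAt.congr_of_eventuallyEq ?_ hloc
  simpa [Pi.pow_def] using ((hasDerivAt_id (a + h)).sub_const a).pow 2

lemma exists_mem_near_disjoint_Ioo_right (hS : IsClosed S) (hInt : interior S = ∅)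
    (hx : x ∈ S) (hε : 0 < ε) : ∃ a ∈ S, |a - x| < ε ∧ ∃ g > 0, Disjoint (Ioo a (a + g)) S := by
  obtain ⟨y, hyS, hy⟩ := (interior_eq_empty_iff_dense_compl.1 hInt).exists_between
    (lt_add_of_pos_right x hε)
  set T := S ∩ Iic y
  have hT : sSup T ∈ T := (hS.inter isClosed_Iic).csSup_mem ⟨x, hx, hy.1.le⟩
    (bddAbove_Iic.mono inter_subset_right)
  have hxa : x ≤ sSup T := le_csSup (bddAbove_Iic.mono inter_subset_right) ⟨hx, hy.1.le⟩
  have hay : sSup T < y := hT.2.lt_of_ne fun h => hyS (h ▸ hT.1)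
  refine ⟨sSup T, hT.1, abs_lt.2 ⟨by linarith, by linarith [hy.2]⟩, y - sSup T, sub_pos.2 hay, ?_⟩
  rw [add_sub_cancel]
  exact Set.disjoint_left.2 fun t ht htS =>
    (le_csSup (bddAbove_Iic.mono inter_subset_right) ⟨htS, ht.2.le⟩).not_gt ht.1

lemma exists_mem_near_disjoint_Ioo_left (hS : IsClosed S) (hInt : interior S = ∅)
    (hx : x ∈ S) (hε : 0 < ε) : ∃ a ∈ S, |a - x| < ε ∧ ∃ g > 0, Disjoint (Ioo (a - g) a) S := by
  have hInt' : interior (-S) = ∅ := by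
    simpa [hInt] using ((Homeomorph.neg ℝ).image_interior S).symm
  obtain ⟨a, ha, hax, g, hg, hgap⟩ :=
    exists_mem_near_disjoint_Ioo_right hS.neg hInt' (neg_mem_neg.2 hx) hε
  refine ⟨-a, ha, by rwa [show -a - x = -(a - -x) by ring, abs_neg], g, hg,
    Set.disjoint_left.2 fun t ht htS => Set.disjoint_left.1 hgap ?_ (neg_mem_neg.2 htS)⟩
  constructor <;> linarith [ht.1, ht.2]

lemma exists_mem_near_eventually_disjoint_ball (hS : IsClosed S) (hInt : interior S = ∅)
    (hx : x ∈ S) (c : ℝ) (hε : 0 < ε) : ∃ a ∈ S, |a - x| < ε ∧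
      ∀ᶠ θ in 𝓝[>] 0, Disjoint (ball (a + 2 * (θ * c)) (2 * |θ * c|)) S := by
  rcases lt_trichotomy c 0 with hc | rfl | hc
  · obtain ⟨a, ha, hax, g, hg, hgap⟩ := exists_mem_near_disjoint_Ioo_left hS hInt hx hε
    refine ⟨a, ha, hax, ?_⟩
    filter_upwards [Ioo_mem_nhdsGT (show 0 < g / (4 * -c) by have := neg_pos.2 hc; positivity)]
      with θ ⟨hθ, hθg⟩
    rw [lt_div_iff₀ (by linarith)] at hθg
    rw [abs_of_neg (mul_neg_of_pos_of_neg hθ hc), Real.ball_eq_Ioo]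
    exact hgap.mono_left (Ioo_subset_Ioo (by linarith) (by linarith))
  · exact ⟨x, hx, by simpa using hε, Eventually.of_forall fun θ => by simp⟩
  · obtain ⟨a, ha, hax, g, hg, hgap⟩ := exists_mem_near_disjoint_Ioo_right hS hInt hx hε
    refine ⟨a, ha, hax, ?_⟩
    filter_upwards [Ioo_mem_nhdsGT (show 0 < g / (4 * c) by positivity)] with θ ⟨hθ, hθg⟩
    rw [lt_div_iff₀ (by linarith)] at hθg
    rw [abs_of_pos (mul_pos hθ hc), Real.ball_eq_Ioo]
    exact hgap.mono_left (Ioo_subset_Ioo (by linarith) (by linarith))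

end Real

lemma HasGradientAt.norm_le_of_lipschitzWith {F : Type*} [NormedAddCommGroup F]
    [InnerProductSpace ℝ F] [CompleteSpace F] {f : F → ℝ} {f' x : F} {K : NNReal}
    (hf : HasGradientAt f f' x) (hK : LipschitzWith K f) : ‖f'‖ ≤ K := by
  simpa using (hasGradientAt_iff_hasFDerivAt.1 hf).le_of_lipschitz hK

lemma HasDerivAt.comp_hasGradientAt {F : Type*} [NormedAddCommGroup F] [InnerProductSpace ℝ F]
    [CompleteSpace F] {φ : ℝ → ℝ} {φ' : ℝ} {g : F → ℝ} {g' x : F}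
    (hφ : HasDerivAt φ φ' (g x)) (hg : HasGradientAt g g' x) :
    HasGradientAt (φ ∘ g) (φ' • g') x := by
  rw [hasGradientAt_iff_hasFDerivAt] at hg ⊢
  refine (hφ.comp_hasFDerivAt x hg).congr_fderiv ?_
  ext v
  simp

lemma hasGradientAt_sum_comp_apply {ι : Type*} [Fintype ι] {g : ι → ℝ → ℝ}
    {d w : EuclideanSpace ℝ ι} (hg : ∀ i, HasDerivAt (g i) (d i) (w i)) :
    HasGradientAt (fun x : EuclideanSpace ℝ ι => ∑ i, g i (x i)) d w := by
  rw [hasGradientAt_iff_hasFDerivAt]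
  have hcomp i := (hg i).hasFDerivAt.comp w (EuclideanSpace.proj (𝕜 := ℝ) (ι := ι) i).hasFDerivAt
  refine (HasFDerivAt.fun_sum (u := Finset.univ) fun i _ => hcomp i).congr_fderiv ?_
  ext v
  simp [PiLp.inner_apply, mul_comm]

def prodSet (S : Set ℝ) : Set E2 := {w | w 0 ∈ S ∧ w 1 ∈ S}

section prodSet

variable {S : Set ℝ}

lemma infDist_prodSet (hS : IsClosed S) (hne : S.Nonempty) (w : E2) :
    infDist w (prodSet S) = √(infDist (w 0) S ^ 2 + infDist (w 1) S ^ 2) := by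
  obtain ⟨p, hp, hpw⟩ := hS.exists_infDist_eq_dist hne (w 0)
  obtain ⟨q, hq, hqw⟩ := hS.exists_infDist_eq_dist hne (w 1)
  have hpq : !₂[p, q] ∈ prodSet S := ⟨hp, hq⟩
  refine le_antisymm ?_ ((le_infDist ⟨_, hpq⟩).2 fun c hc => ?_)
  · calc infDist w (prodSet S) ≤ dist w !₂[p, q] := infDist_le_dist_of_mem hpq
      _ = _ := by simp [EuclideanSpace.dist_eq, Fin.sum_univ_two, hpw, hqw]
  · rw [EuclideanSpace.dist_eq, Fin.sum_univ_two]
    have h0 : infDist (w 0) S ≤ dist (w 0) (c 0) := infDist_le_dist_of_mem hc.1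
    have h1 : infDist (w 1) S ≤ dist (w 1) (c 1) := infDist_le_dist_of_mem hc.2
    gcongr <;> exact infDist_nonneg

lemma hasGradientAt_neg_infDist_prodSet (hS : IsClosed S) {a h : E2} (ha : a ∈ prodSet S)
    (hh : h ≠ 0) (hgap : ∀ i, Disjoint (ball (a i + 2 * h i) (2 * |h i|)) S) :
    HasGradientAt (fun w => -infDist w (prodSet S)) (-‖h‖⁻¹ • h) (a + h) := by
  have ha' : ∀ i, a i ∈ S := Fin.forall_fin_two.2 ha
  have hval i : infDist ((a + h) i) S = |h i| := by
    simpa using Real.infDist_eq_abs_sub_of_disjoint_ball (ha' i) (hgap i)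
      (mem_closedBall_self (abs_nonneg (h i)))
  have hF : HasGradientAt (fun w : E2 => ∑ i, infDist (w i) S ^ 2) ((2 : ℝ) • h) (a + h) :=
    hasGradientAt_sum_comp_apply (g := fun _ t => infDist t S ^ 2) fun i =>
      Real.hasDerivAt_sq_infDist_of_disjoint_ball (ha' i) (hgap i)
  have hFval : ∑ i, infDist ((a + h) i) S ^ 2 = ‖h‖ ^ 2 := by
    simp only [hval, sq_abs, EuclideanSpace.real_norm_sq_eq]
  have hsqrt : HasDerivAt (fun s => -√s) (-(2 * ‖h‖)⁻¹) (∑ i, infDist ((a + h) i) S ^ 2) := by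
    rw [hFval]
    simpa [Real.sqrt_sq (norm_nonneg h)] using
      (Real.hasDerivAt_sqrt (pow_ne_zero 2 (norm_ne_zero_iff.2 hh))).fun_neg
  convert hsqrt.comp_hasGradientAt (g := fun w : E2 => ∑ i, infDist (w i) S ^ 2) hF using 1
  · ext w
    simp [infDist_prodSet hS ⟨_, ha.1⟩, Fin.sum_univ_two]
  · rw [smul_smul]
    congr 1
    field_simp [norm_ne_zero_iff.2 hh]

lemma mem_closure_setOf_hasGradientAt_neg_infDist_prodSet (hS : IsClosed S)
    (hInt : interior S = ∅) {z : E2} (hz : z ∈ prodSet S) {v : E2} (hv : ‖v‖ = 1) :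
    z ∈ closure {w | HasGradientAt (fun w => -infDist w (prodSet S)) v w} := by
  refine Metric.mem_closure_iff.2 fun ε hε => ?_
  obtain ⟨a₀, ha₀, ha₀z, hgap₀⟩ := Real.exists_mem_near_eventually_disjoint_ball hS hInt hz.1
    (-v 0) (by positivity : 0 < ε / 4)
  obtain ⟨a₁, ha₁, ha₁z, hgap₁⟩ := Real.exists_mem_near_eventually_disjoint_ball hS hInt hz.2
    (-v 1) (by positivity : 0 < ε / 4)
  obtain ⟨θ, ⟨hθ₀, hθ₁⟩, hθ, hθε⟩ :=
    ((hgap₀.and hgap₁).and (Ioo_mem_nhdsGT (by positivity : 0 < ε / 2))).exists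
  have hθv : ‖θ • -v‖ = θ := by simp [norm_smul, hv, hθ.le]
  have hza : dist z !₂[a₀, a₁] < ε / 2 := by
    have h₀ : dist (z 0) a₀ < ε / 4 := by rwa [Real.dist_eq, abs_sub_comm]
    have h₁ : dist (z 1) a₁ < ε / 4 := by rwa [Real.dist_eq, abs_sub_comm]
    rw [EuclideanSpace.dist_eq, Fin.sum_univ_two, Real.sqrt_lt' (by positivity)]
    change dist (z 0) a₀ ^ 2 + dist (z 1) a₁ ^ 2 < (ε / 2) ^ 2
    nlinarith [dist_nonneg (x := z 0) (y := a₀), dist_nonneg (x := z 1) (y := a₁)]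
  refine ⟨!₂[a₀, a₁] + θ • -v, ?_, ?_⟩
  · have := hasGradientAt_neg_infDist_prodSet hS (a := !₂[a₀, a₁]) (h := θ • -v) ⟨ha₀, ha₁⟩
      (fun h0 => hθ.ne' (by rw [← hθv, h0, norm_zero])) (Fin.forall_fin_two.2 ⟨hθ₀, hθ₁⟩)
    rwa [hθv, neg_smul, smul_smul, inv_mul_cancel₀ hθ.ne', one_smul, neg_neg] at this
  · calc dist z (!₂[a₀, a₁] + θ • -v) ≤ dist z !₂[a₀, a₁] + ‖θ • -v‖ := by
          simpa using dist_triangle z !₂[a₀, a₁] (!₂[a₀, a₁] + θ • -v)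
      _ < ε := by linarith

end prodSet

lemma clarke_subset_closedBall {f : E2 → ℝ} {K : NNReal} (hf : LipschitzWith K f) (z : E2) :
    clarke f z ⊆ closedBall 0 K :=
  convexHull_min (fun _ ⟨_, _, hg, _, hgv⟩ => isClosed_closedBall.mem_of_tendsto hgv
    (Eventually.of_forall fun k => mem_closedBall_zero_iff.2
      ((hg k).norm_le_of_lipschitzWith hf))) (convex_closedBall 0 K)

lemma mem_clarke_of_mem_closure {f : E2 → ℝ} {z v : E2}
    (h : z ∈ closure {w | HasGradientAt f v w}) : v ∈ clarke f z :=
  subset_convexHull ℝ _ <|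
    let ⟨zk, hzk, hlim⟩ := mem_closure_iff_seq_limit.1 h
    ⟨zk, fun _ => v, hzk, hlim, tendsto_const_nhds⟩

theorem stmt15 (S : Set ℝ) (hS : IsClosed S) (hInt : interior S = ∅)
    (z : E2) (hz : z 0 ∈ S ∧ z 1 ∈ S) :
    clarke (fun w : E2 => -infDist w {w' : E2 | w' 0 ∈ S ∧ w' 1 ∈ S}) z =
      closedBall (0 : E2) 1 := by
  have hlip : LipschitzWith 1 fun w : E2 => -infDist w {w' : E2 | w' 0 ∈ S ∧ w' 1 ∈ S} :=
    (lipschitz_infDist_pt _).neg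
  refine subset_antisymm (by simpa using clarke_subset_closedBall hlip z) ?_
  rw [← convexHull_sphere_eq_closedBall 0 zero_le_one]
  exact convexHull_min (fun v hv => mem_clarke_of_mem_closure
    (mem_closure_setOf_hasGradientAt_neg_infDist_prodSet hS hInt hz (by simpa using hv)))
    (convex_convexHull ℝ _)
end

section
/- Let f : [0,1] → ℝ be a function such that (x, f(x)) ∈ C_i for all x ∈ [0,1], where C_i is the i-th stage of the fractal construction (a union of 4^i squares of side 4^{−i} arranged so that any function whose graph lies in C_i must traverse vertical gaps of total length at least i). Then the total variation of f on [0,1] is at least i. Consequently, any function f with (x, f(x)) ∈ ⋂_i C_i for all x ∈ [0,1] has infinite total variation. -/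
open Set

/-- Vertical offsets (in quarter units) of the four sub-squares, arranged so that
consecutive squares over adjacent x-intervals differ in height. -/
noncomputable def h4 : Fin 4 → ℝ := ![0, 3, 0, 3]

/-- The contraction mapping the unit square onto the `k`-th sub-square. -/
noncomputable def Tmap (k : Fin 4) (z : ℝ × ℝ) : ℝ × ℝ :=
  ((z.1 + (k : ℕ)) / 4, (z.2 + h4 k) / 4)

/-- The stages of the fractal construction: `C 0` is the unit square and each square
of side `4⁻ⁱ` is replaced by four sub-squares of side `4⁻ⁱ⁻¹`. -/
noncomputable def Cstage : ℕ → Set (ℝ × ℝ)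
  | 0 => Icc (0:ℝ) 1 ×ˢ Icc (0:ℝ) 1
  | (i + 1) => ⋃ k : Fin 4, Tmap k '' Cstage i

open scoped NNReal ENNReal

/-!
If the graph of `f` over the open interval `(0,1)` lies in `Cstage i`, then the variation of `f`
on `[0,1]` is at least `i + d (f 0) + d (f 1)`, where `d` is the distance to `[0,1]`; only the open
interval can be assumed, since at a quarter point `k/4` the graph may lie in either neighbouring
square. On its `k`-th quarter, `f` rescaled to `z ↦ 4 f ((z+k)/4) - h4 k` satisfies the hypothesis
for `i`, and rescaling multiplies variation by at most 4. At each of the three inner quarter points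
the two neighbouring rescalings take the same value `4 f x` up to height shifts differing by 3, so
their endpoint distances add up to at least 2: these 6 units, divided by 4, pay for going from `i`
to `i + 1`.
-/

noncomputable def distUnitInterval (y : ℝ) : ℝ := max (max (-y) (y - 1)) 0

lemma distUnitInterval_nonneg (y : ℝ) : 0 ≤ distUnitInterval y := le_max_right _ _

lemma neg_le_distUnitInterval (y : ℝ) : -y ≤ distUnitInterval y :=
  le_max_of_le_left (le_max_left _ _)

lemma sub_one_le_distUnitInterval (y : ℝ) : y - 1 ≤ distUnitInterval y :=
  le_max_of_le_left (le_max_right _ _)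

lemma distUnitInterval_le_abs_sub {p : ℝ} (y : ℝ) (hp : p ∈ Icc (0:ℝ) 1) :
    distUnitInterval y ≤ |y - p| :=
  max_le (max_le (by linarith [neg_abs_le (y - p), hp.1]) (by linarith [le_abs_self (y - p), hp.2]))
    (abs_nonneg _)

lemma four_mul_distUnitInterval_le {c : ℝ} (y : ℝ) (hc₀ : 0 ≤ c) (hc₃ : c ≤ 3) :
    4 * distUnitInterval y ≤ distUnitInterval (4 * y - c) := by
  have h : distUnitInterval y ≤ distUnitInterval (4 * y - c) / 4 :=
    max_le (max_le (by linarith [neg_le_distUnitInterval (4 * y - c)])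
      (by linarith [sub_one_le_distUnitInterval (4 * y - c)]))
      (by linarith [distUnitInterval_nonneg (4 * y - c)])
  linarith

lemma two_le_distUnitInterval_add_sub_three (z : ℝ) :
    2 ≤ distUnitInterval z + distUnitInterval (z - 3) := by
  rcases le_total z 1 with h | h
  · linarith [neg_le_distUnitInterval (z - 3), distUnitInterval_nonneg z]
  · linarith [sub_one_le_distUnitInterval z, neg_le_distUnitInterval (z - 3),
      distUnitInterval_nonneg (z - 3)]

lemma h4_mem_Icc (k : Fin 4) : h4 k ∈ Icc (0:ℝ) 3 := by
  fin_cases k <;> simp [h4]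

lemma natCast_fin_four_le (k : Fin 4) : ((k : ℕ) : ℝ) ≤ 3 := by
  exact_mod_cast Nat.le_of_lt_succ k.isLt

lemma Tmap_injective (k : Fin 4) : Function.Injective (Tmap k) := by
  rintro ⟨p, q⟩ ⟨z, y⟩ h
  simp only [Tmap, Prod.mk.injEq] at h
  exact Prod.ext (by linarith [h.1]) (by linarith [h.2])

lemma Cstage_subset (i : ℕ) : Cstage i ⊆ Icc (0:ℝ) 1 ×ˢ Icc (0:ℝ) 1 := by
  induction i with
  | zero => exact subset_rfl
  | succ i ih =>
    simp only [Cstage, iUnion_subset_iff, image_subset_iff]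
    rintro k ⟨p, q⟩ hpq
    obtain ⟨⟨hp₀, hp₁⟩, hq₀, hq₁⟩ := ih hpq
    have hk := natCast_fin_four_le k
    have hk₀ : (0:ℝ) ≤ (k : ℕ) := Nat.cast_nonneg _
    obtain ⟨hh₀, hh₃⟩ := h4_mem_Icc k
    simp only [mem_preimage, Tmap, mem_prod, mem_Icc]
    refine ⟨⟨?_, ?_⟩, ?_, ?_⟩ <;> linarith

lemma natCast_eq_of_add_eq {p z : ℝ} {j k : ℕ} (hp : p ∈ Icc (0:ℝ) 1) (hz : z ∈ Ioo (0:ℝ) 1)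
    (h : p + j = z + k) : j = k := by
  have hjk : (j : ℝ) < k + 1 := by linarith [hp.1, hz.2]
  have hkj : (k : ℝ) < j + 1 := by linarith [hp.2, hz.1]
  exact_mod_cast (Nat.lt_succ_iff.1 (by exact_mod_cast hjk)).antisymm
    (Nat.lt_succ_iff.1 (by exact_mod_cast hkj))

lemma mem_Cstage_of_Tmap_mem_Cstage_succ {i : ℕ} {k : Fin 4} {z y : ℝ} (hz : z ∈ Ioo (0:ℝ) 1)
    (h : Tmap k (z, y) ∈ Cstage (i + 1)) : (z, y) ∈ Cstage i := by
  obtain ⟨j, ⟨p, q⟩, hpq, heq⟩ := mem_iUnion.1 h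
  have hjk : j = k := by
    refine Fin.ext (natCast_eq_of_add_eq (Cstage_subset i hpq).1 hz ?_)
    have := congrArg Prod.fst heq
    simp only [Tmap] at this
    linarith
  subst hjk
  rwa [← Tmap_injective j heq]

noncomputable def quarterRescale (f : ℝ → ℝ) (k : Fin 4) (z : ℝ) : ℝ :=
  4 * f ((z + (k : ℕ)) / 4) - h4 k

lemma Tmap_quarterRescale (f : ℝ → ℝ) (k : Fin 4) (z : ℝ) :
    Tmap k (z, quarterRescale f k z) = ((z + (k : ℕ)) / 4, f ((z + (k : ℕ)) / 4)) := by
  simp only [Tmap, quarterRescale, Prod.mk.injEq, true_and]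
  ring

lemma quarterRescale_mem_Cstage {i : ℕ} {f : ℝ → ℝ}
    (hf : ∀ x ∈ Ioo (0:ℝ) 1, (x, f x) ∈ Cstage (i + 1)) (k : Fin 4) :
    ∀ z ∈ Ioo (0:ℝ) 1, (z, quarterRescale f k z) ∈ Cstage i := by
  intro z hz
  have hk := natCast_fin_four_le k
  have hk₀ : (0:ℝ) ≤ (k : ℕ) := Nat.cast_nonneg _
  refine mem_Cstage_of_Tmap_mem_Cstage_succ (k := k) hz ?_
  rw [Tmap_quarterRescale]
  exact hf _ ⟨by linarith [hz.1], by linarith [hz.2]⟩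

lemma eVariationOn_quarterRescale_le (f : ℝ → ℝ) (k : Fin 4) :
    eVariationOn (quarterRescale f k) (Icc (0:ℝ) 1) ≤
      4 * eVariationOn f (Icc (((k : ℕ) : ℝ) / 4) ((((k : ℕ) : ℝ) + 1) / 4)) := by
  have hL : LipschitzWith 4 (fun y : ℝ => 4 * y - h4 k) := by
    refine LipschitzWith.of_dist_le_mul fun x y => ?_
    rw [Real.dist_eq, Real.dist_eq, show 4 * x - h4 k - (4 * y - h4 k) = 4 * (x - y) by ring,
      abs_mul]
    norm_num
  have hmono : MonotoneOn (fun z : ℝ => (z + (k : ℕ)) / 4) (Icc (0:ℝ) 1) :=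
    fun a _ b _ hab => by dsimp only; linarith
  have hmaps : MapsTo (fun z : ℝ => (z + (k : ℕ)) / 4) (Icc (0:ℝ) 1)
      (Icc (((k : ℕ) : ℝ) / 4) ((((k : ℕ) : ℝ) + 1) / 4)) :=
    fun a ha => ⟨by dsimp only; linarith [ha.1], by dsimp only; linarith [ha.2]⟩
  calc eVariationOn (quarterRescale f k) (Icc (0:ℝ) 1)
      = eVariationOn ((fun y : ℝ => 4 * y - h4 k) ∘ (f ∘ fun z : ℝ => (z + (k : ℕ)) / 4))
          (Icc (0:ℝ) 1) := rfl
    _ ≤ (4 : ℝ≥0) * eVariationOn (f ∘ fun z : ℝ => (z + (k : ℕ)) / 4) (Icc (0:ℝ) 1) :=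
        hL.lipschitzOnWith.comp_eVariationOn_le (mapsTo_univ _ _)
    _ ≤ 4 * eVariationOn f (Icc (((k : ℕ) : ℝ) / 4) ((((k : ℕ) : ℝ) + 1) / 4)) := by
        gcongr
        · norm_num
        · exact eVariationOn.comp_le_of_monotoneOn f _ hmono hmaps

lemma eVariationOn_Icc_zero_one_eq_sum_quarters (f : ℝ → ℝ) :
    eVariationOn f (Icc (0:ℝ) 1) =
      ∑ k : Fin 4, eVariationOn f (Icc (((k : ℕ) : ℝ) / 4) ((((k : ℕ) : ℝ) + 1) / 4)) := by
  have split {a b c : ℝ} (hab : a ≤ b) (hbc : b ≤ c) :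
      eVariationOn f (Icc a b) + eVariationOn f (Icc b c) = eVariationOn f (Icc a c) := by
    simpa using eVariationOn.Icc_add_Icc f (s := univ) hab hbc (mem_univ b)
  rw [Fin.sum_univ_four, ← split (by norm_num : (0:ℝ) ≤ 3 / 4) (by norm_num : (3 / 4 : ℝ) ≤ 1),
    ← split (by norm_num : (0:ℝ) ≤ 1 / 2) (by norm_num : (1 / 2 : ℝ) ≤ 3 / 4),
    ← split (by norm_num : (0:ℝ) ≤ 1 / 4) (by norm_num : (1 / 4 : ℝ) ≤ 1 / 2)]
  norm_num

lemma sum_distUnitInterval_quarterRescale (f : ℝ → ℝ) (i : ℝ) :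
    4 * (i + 1 + distUnitInterval (f 0) + distUnitInterval (f 1)) ≤
      ∑ k : Fin 4, (i + distUnitInterval (quarterRescale f k 0) +
        distUnitInterval (quarterRescale f k 1)) := by
  have junction (x : ℝ) := two_le_distUnitInterval_add_sub_three (4 * f x)
  have h₀ := four_mul_distUnitInterval_le (f 0) le_rfl (by norm_num : (0:ℝ) ≤ 3)
  have h₁ := four_mul_distUnitInterval_le (f 1) (by norm_num : (0:ℝ) ≤ 3) le_rfl
  simp [Fin.sum_univ_four, quarterRescale, h4] at h₀ ⊢
  norm_num
  linarith [junction 4⁻¹, junction 2⁻¹, junction (3 / 4)]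

lemma ofReal_distUnitInterval_add_le_eVariationOn {f : ℝ → ℝ}
    (hf : ∀ x ∈ Ioo (0:ℝ) 1, (x, f x) ∈ Cstage 0) :
    ENNReal.ofReal (distUnitInterval (f 0) + distUnitInterval (f 1)) ≤
      eVariationOn f (Icc (0:ℝ) 1) := by
  have hmid : f (1 / 2) ∈ Icc (0:ℝ) 1 := (hf (1 / 2) (by norm_num)).2
  have h₀ : distUnitInterval (f 0) ≤ dist (f 0) (f (1 / 2)) :=
    distUnitInterval_le_abs_sub _ hmid
  have h₁ : distUnitInterval (f 1) ≤ dist (f (1 / 2)) (f 1) := by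
    rw [dist_comm]; exact distUnitInterval_le_abs_sub _ hmid
  calc ENNReal.ofReal (distUnitInterval (f 0) + distUnitInterval (f 1))
      ≤ edist (f 0) (f (1 / 2)) + edist (f (1 / 2)) (f 1) := by
        rw [edist_dist, edist_dist, ← ENNReal.ofReal_add dist_nonneg dist_nonneg]
        exact ENNReal.ofReal_le_ofReal (add_le_add h₀ h₁)
    _ ≤ eVariationOn f (Icc 0 (1 / 2)) + eVariationOn f (Icc (1 / 2) 1) :=
        add_le_add (eVariationOn.edist_le f (by norm_num) (by norm_num))
          (eVariationOn.edist_le f (by norm_num) (by norm_num))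
    _ = eVariationOn f (Icc (0:ℝ) 1) := by
        simpa using eVariationOn.Icc_add_Icc f (s := univ) (by norm_num : (0:ℝ) ≤ 1 / 2)
          (by norm_num : (1 / 2 : ℝ) ≤ 1) (mem_univ _)

lemma ofReal_add_distUnitInterval_le_eVariationOn (i : ℕ) {f : ℝ → ℝ}
    (hf : ∀ x ∈ Ioo (0:ℝ) 1, (x, f x) ∈ Cstage i) :
    ENNReal.ofReal (i + distUnitInterval (f 0) + distUnitInterval (f 1)) ≤
      eVariationOn f (Icc (0:ℝ) 1) := by
  induction i generalizing f with
  | zero => simpa using ofReal_distUnitInterval_add_le_eVariationOn hf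
  | succ i ih =>
    have hnonneg (g : ℝ → ℝ) : 0 ≤ (i : ℝ) + distUnitInterval (g 0) + distUnitInterval (g 1) := by
      linarith [distUnitInterval_nonneg (g 0), distUnitInterval_nonneg (g 1), i.cast_nonneg (α := ℝ)]
    rw [← ENNReal.mul_le_mul_iff_right (by norm_num : (4 : ℝ≥0∞) ≠ 0) ENNReal.ofNat_ne_top]
    calc 4 * ENNReal.ofReal ((i + 1 : ℕ) + distUnitInterval (f 0) + distUnitInterval (f 1))
        = ENNReal.ofReal (4 * ((i : ℝ) + 1 + distUnitInterval (f 0) + distUnitInterval (f 1))) := by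
          rw [ENNReal.ofReal_mul (by norm_num), ENNReal.ofReal_ofNat]
          push_cast
          rfl
      _ ≤ ENNReal.ofReal (∑ k : Fin 4, ((i : ℝ) + distUnitInterval (quarterRescale f k 0) +
            distUnitInterval (quarterRescale f k 1))) :=
          ENNReal.ofReal_le_ofReal (sum_distUnitInterval_quarterRescale f i)
      _ = ∑ k : Fin 4, ENNReal.ofReal ((i : ℝ) + distUnitInterval (quarterRescale f k 0) +
            distUnitInterval (quarterRescale f k 1)) :=
          ENNReal.ofReal_sum_of_nonneg fun k _ => hnonneg (quarterRescale f k)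
      _ ≤ ∑ k : Fin 4, 4 * eVariationOn f (Icc (((k : ℕ) : ℝ) / 4) ((((k : ℕ) : ℝ) + 1) / 4)) :=
          Finset.sum_le_sum fun k _ =>
            (ih (quarterRescale_mem_Cstage hf k)).trans (eVariationOn_quarterRescale_le f k)
      _ = 4 * eVariationOn f (Icc (0:ℝ) 1) := by
          rw [← Finset.mul_sum, eVariationOn_Icc_zero_one_eq_sum_quarters]

theorem stmt16 :
    (∀ i : ℕ, ∀ f : ℝ → ℝ, (∀ x ∈ Icc (0:ℝ) 1, (x, f x) ∈ Cstage i) →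
      (i : ENNReal) ≤ eVariationOn f (Icc (0:ℝ) 1)) ∧
    (∀ f : ℝ → ℝ, (∀ x ∈ Icc (0:ℝ) 1, (x, f x) ∈ ⋂ i, Cstage i) →
      eVariationOn f (Icc (0:ℝ) 1) = ⊤) := by
  have lower (i : ℕ) (f : ℝ → ℝ) (hf : ∀ x ∈ Icc (0:ℝ) 1, (x, f x) ∈ Cstage i) :
      (i : ENNReal) ≤ eVariationOn f (Icc (0:ℝ) 1) := by
    calc (i : ENNReal) = ENNReal.ofReal i := (ENNReal.ofReal_natCast i).symm
      _ ≤ ENNReal.ofReal (i + distUnitInterval (f 0) + distUnitInterval (f 1)) :=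
          ENNReal.ofReal_le_ofReal <| by
            linarith [distUnitInterval_nonneg (f 0), distUnitInterval_nonneg (f 1)]
      _ ≤ eVariationOn f (Icc (0:ℝ) 1) :=
          ofReal_add_distUnitInterval_le_eVariationOn i fun x hx => hf x (Ioo_subset_Icc_self hx)
  refine ⟨lower, fun f hf => eq_top_iff.2 ?_⟩
  rw [← ENNReal.iSup_natCast]
  exact iSup_le fun i => lower i f fun x hx => mem_iInter.1 (hf x hx) i
end
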